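/- Let F be a TP-set system over a finite ground set U, and let X ∈ F be a nonempty member of minimum cardinality among all nonempty members of F. Then for any two nonempty members Y₁, Y₂ ∈ F, if Y₁ \ X = Y₂ \ X then Y₁ = Y₂. -/

import Mathlib

/-!
If `Y₁ \ X = Y₂ \ X` contains a point `d`, then any `a ∈ X ∩ Y₁` lies in `Y₂`: otherwise `d ∈ Y₂ \ X`
and `a ∈ X \ Y₂` would both lie in `Y₁`, against the TP property. If the common difference is
empty, both sets are nonempty subsets of `X`, hence equal to `X` by minimality of `X.card`.
-/

section

open Finset

variable {U : Type*} [DecidableEq U]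

def IsTPSetSystem (F : Finset (Finset U)) : Prop :=
  ∀ X₁ ∈ F, ∀ X₂ ∈ F, ∀ x₁ ∈ X₁ \ X₂, ∀ x₂ ∈ X₂ \ X₁, ∀ Y ∈ F, ¬(x₁ ∈ Y ∧ x₂ ∈ Y)

namespace IsTPSetSystem

variable {F : Finset (Finset U)} {X Y Z : Finset U}

theorem inter_subset_of_mem_sdiff (hF : IsTPSetSystem F) (hX : X ∈ F) (hY : Y ∈ F)
    (hZ : Z ∈ F) {d : U} (hdY : d ∈ Y \ X) (hdZ : d ∈ Z) : Z ∩ X ⊆ Y := by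
  intro a ha
  obtain ⟨haZ, haX⟩ := mem_inter.mp ha
  by_contra haY
  exact hF Y hY X hX d hdY a (mem_sdiff.mpr ⟨haX, haY⟩) Z hZ ⟨hdZ, haZ⟩

theorem subset_of_sdiff_subset (hF : IsTPSetSystem F) (hX : X ∈ F) (hY : Y ∈ F)
    (hZ : Z ∈ F) (hne : (Z \ X).Nonempty) (h : Z \ X ⊆ Y) : Z ⊆ Y := by
  obtain ⟨d, hd⟩ := hne
  have hdY : d ∈ Y \ X := mem_sdiff.mpr ⟨h hd, (mem_sdiff.mp hd).2⟩
  rw [← sdiff_union_inter Z X]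
  exact union_subset h (hF.inter_subset_of_mem_sdiff hX hY hZ hdY (mem_sdiff.mp hd).1)

theorem eq_of_sdiff_eq (hF : IsTPSetSystem F) (hX : X ∈ F) (hY : Y ∈ F) (hZ : Z ∈ F)
    (hne : (Y \ X).Nonempty) (h : Y \ X = Z \ X) : Y = Z :=
  (hF.subset_of_sdiff_subset hX hZ hY hne (h.subset.trans sdiff_subset)).antisymm
    (hF.subset_of_sdiff_subset hX hY hZ (h ▸ hne) (h.symm.subset.trans sdiff_subset))

end IsTPSetSystem

end

theorem tp_set_system_min_member_determines_general {U : Type*} [DecidableEq U]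
    (F : Finset (Finset U))
    (hTP : ∀ X₁ ∈ F, ∀ X₂ ∈ F, ∀ x₁ ∈ X₁ \ X₂, ∀ x₂ ∈ X₂ \ X₁,
      ∀ Y ∈ F, ¬(x₁ ∈ Y ∧ x₂ ∈ Y))
    (X : Finset U) (hXF : X ∈ F)
    (hmin : ∀ Z ∈ F, Z.Nonempty → X.card ≤ Z.card)
    (Y₁ Y₂ : Finset U) (hY₁ : Y₁ ∈ F) (hY₂ : Y₂ ∈ F)
    (hY₁ne : Y₁.Nonempty) (hY₂ne : Y₂.Nonempty)
    (hdiff : Y₁ \ X = Y₂ \ X) :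
    Y₁ = Y₂ := by
  rcases (Y₁ \ X).eq_empty_or_nonempty with hempty | hne
  · have h₁ : Y₁ ⊆ X := Finset.sdiff_eq_empty_iff_subset.mp hempty
    have h₂ : Y₂ ⊆ X := Finset.sdiff_eq_empty_iff_subset.mp (hdiff ▸ hempty)
    rw [Finset.eq_of_subset_of_card_le h₁ (hmin Y₁ hY₁ hY₁ne),
      Finset.eq_of_subset_of_card_le h₂ (hmin Y₂ hY₂ hY₂ne)]
  · exact IsTPSetSystem.eq_of_sdiff_eq hTP hXF hY₁ hY₂ hne hdiff

/-- In a TP-set system, if `X` is a nonempty member of minimum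
cardinality among nonempty members, then nonempty members are determined by
their difference with `X`. -/
theorem tp_set_system_min_member_determines {U : Type*} [Fintype U] [DecidableEq U]
    (F : Finset (Finset U))
    (hTP : ∀ X₁ ∈ F, ∀ X₂ ∈ F, ∀ x₁ ∈ X₁ \ X₂, ∀ x₂ ∈ X₂ \ X₁,
      ∀ Y ∈ F, ¬(x₁ ∈ Y ∧ x₂ ∈ Y))
    (X : Finset U) (hXF : X ∈ F) (hXne : X.Nonempty)
    (hmin : ∀ Z ∈ F, Z.Nonempty → X.card ≤ Z.card)
    (Y₁ Y₂ : Finset U) (hY₁ : Y₁ ∈ F) (hY₂ : Y₂ ∈ F)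
    (hY₁ne : Y₁.Nonempty) (hY₂ne : Y₂.Nonempty)
    (hdiff : Y₁ \ X = Y₂ \ X) :
    Y₁ = Y₂ :=
  tp_set_system_min_member_determines_general F hTP X hXF hmin Y₁ Y₂ hY₁ hY₂ hY₁ne hY₂ne hdiff
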